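/- Let X = [−1,1]³ ⊂ ℝ³, q = 2, and V1(x) = x1² + x2² + x3². Then J_X[V1] = 1/3; equivalently, (1/8) ∫_{[−1,1]³} (x1 sin x3 − x2 cos x3)² / (x1² + x2² + x3²) dx = 1/3. -/

import Mathlib

open Real MeasureTheory

/-- The vector field `f₁(x) = (cos x₃, sin x₃, 0)ᵀ` of the unicycle model,
as an element of Euclidean `ℝ³` (it depends only on `x₃`). -/
noncomputable def f1 (x3 : ℝ) : EuclideanSpace ℝ (Fin 3) :=
  (WithLp.equiv 2 (Fin 3 → ℝ)).symm ![Real.cos x3, Real.sin x3, 0]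

/-- The vector field `f₂(x) = (0, 0, 1)ᵀ` of the unicycle model. -/
noncomputable def f2 : EuclideanSpace ℝ (Fin 3) :=
  (WithLp.equiv 2 (Fin 3 → ℝ)).symm ![0, 0, 1]

/-- The admissibility measure
`J_X[V] = (1/μ(X)) ∫_X inf_{u∈ℝ²} ‖u₁ f₁(x) + u₂ f₂(x) + ∇V(x)ᵀ‖^q / ‖∇V(x)‖^q dx`. -/
noncomputable def J (X : Set (EuclideanSpace ℝ (Fin 3))) (q : ℝ)
    (V : EuclideanSpace ℝ (Fin 3) → ℝ) : ℝ :=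
  ((volume X).toReal)⁻¹ *
    ∫ x in X,
      (⨅ u : ℝ × ℝ, ‖u.1 • f1 (x 2) + u.2 • f2 + gradient V x‖) ^ q /
        ‖gradient V x‖ ^ q

/-!
The infimum is the distance from `∇V₁(x) = 2x` to `span {f₁(x), f₂(x)}`, i.e. the length of its
component along the unit normal `(sin x₃, -cos x₃, 0)`; so the integrand is
`g(x) = (x₁ sin x₃ - x₂ cos x₃)² / ‖x‖²`. The cube is invariant under permuting coordinates,
so each `xᵢ² / ‖x‖²` has integral `8 / 3`, these three summing to `1`. It is also invariant under
`x ↦ -(x₂, x₁, x₃)`, which turns `g` into `h(x) = (x₁ cos x₃ + x₂ sin x₃)² / ‖x‖²`; since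
`g + h = (x₁² + x₂²) / ‖x‖²`, the integral of `g` is `8 / 3` as well.
-/

theorem hasGradientAt_norm_sq {F : Type*} [NormedAddCommGroup F] [InnerProductSpace ℝ F]
    [CompleteSpace F] (x : F) : HasGradientAt (fun x : F => ‖x‖ ^ 2) ((2 : ℝ) • x) x := by
  rw [hasGradientAt_iff_hasFDerivAt]
  refine (hasStrictFDerivAt_norm_sq x).hasFDerivAt.congr_fderiv ?_
  ext y
  simp

theorem sq_add_sq_add_sq_eq_norm_sq (x : EuclideanSpace ℝ (Fin 3)) :
    x 0 ^ 2 + x 1 ^ 2 + x 2 ^ 2 = ‖x‖ ^ 2 := by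
  rw [EuclideanSpace.real_norm_sq_eq, Fin.sum_univ_three]

theorem gradient_sq_add_sq_add_sq (x : EuclideanSpace ℝ (Fin 3)) :
    gradient (fun x : EuclideanSpace ℝ (Fin 3) => x 0 ^ 2 + x 1 ^ 2 + x 2 ^ 2) x = (2 : ℝ) • x := by
  simp_rw [sq_add_sq_add_sq_eq_norm_sq]
  exact (hasGradientAt_norm_sq x).gradient

theorem norm_smul_f1_add_smul_f2_add_sq (t a b : ℝ) (p : EuclideanSpace ℝ (Fin 3)) :
    ‖a • f1 t + b • f2 + p‖ ^ 2 =
      (a + p 0 * cos t + p 1 * sin t) ^ 2 + (b + p 2) ^ 2 + (p 0 * sin t - p 1 * cos t) ^ 2 := by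
  rw [EuclideanSpace.real_norm_sq_eq, Fin.sum_univ_three]
  simp [f1, f2]
  linear_combination (a ^ 2 - p 0 ^ 2 - p 1 ^ 2) * sin_sq_add_cos_sq t

theorem iInf_norm_smul_f1_add_smul_f2_add (t : ℝ) (p : EuclideanSpace ℝ (Fin 3)) :
    ⨅ u : ℝ × ℝ, ‖u.1 • f1 t + u.2 • f2 + p‖ = |p 0 * sin t - p 1 * cos t| := by
  have lower (u : ℝ × ℝ) : |p 0 * sin t - p 1 * cos t| ≤ ‖u.1 • f1 t + u.2 • f2 + p‖ := by
    refine abs_le_of_sq_le_sq ?_ (norm_nonneg _)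
    rw [norm_smul_f1_add_smul_f2_add_sq]
    exact le_add_of_nonneg_left (by positivity)
  have attained : ‖(-(p 0 * cos t + p 1 * sin t)) • f1 t + (-p 2) • f2 + p‖ =
      |p 0 * sin t - p 1 * cos t| := by
    rw [← sq_eq_sq₀ (norm_nonneg _) (abs_nonneg _), norm_smul_f1_add_smul_f2_add_sq, sq_abs]
    ring
  have bdd : BddBelow (Set.range fun u : ℝ × ℝ => ‖u.1 • f1 t + u.2 • f2 + p‖) :=
    ⟨0, Set.forall_mem_range.2 fun _ => norm_nonneg _⟩
  exact le_antisymm ((ciInf_le bdd (-(p 0 * cos t + p 1 * sin t), -p 2)).trans_eq attained)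
    (le_ciInf lower)

theorem admissibility_integrand_sq_add_sq_add_sq (x : EuclideanSpace ℝ (Fin 3)) :
    (⨅ u : ℝ × ℝ, ‖u.1 • f1 (x 2) + u.2 • f2 +
        gradient (fun x : EuclideanSpace ℝ (Fin 3) => x 0 ^ 2 + x 1 ^ 2 + x 2 ^ 2) x‖) ^ (2 : ℝ) /
      ‖gradient (fun x : EuclideanSpace ℝ (Fin 3) => x 0 ^ 2 + x 1 ^ 2 + x 2 ^ 2) x‖ ^ (2 : ℝ) =
    (x 0 * sin (x 2) - x 1 * cos (x 2)) ^ 2 / ‖x‖ ^ 2 := by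
  rw [gradient_sq_add_sq_add_sq, iInf_norm_smul_f1_add_smul_f2_add, rpow_two, rpow_two, sq_abs,
    norm_smul, Real.norm_ofNat]
  simp only [PiLp.smul_apply, smul_eq_mul]
  rw [show (2 * x 0 * sin (x 2) - 2 * x 1 * cos (x 2)) ^ 2 =
      2 ^ 2 * (x 0 * sin (x 2) - x 1 * cos (x 2)) ^ 2 by ring, mul_pow,
    mul_div_mul_left _ _ (by norm_num)]

theorem setIntegral_comp_linearIsometryEquiv {E G : Type*} [NormedAddCommGroup E]
    [InnerProductSpace ℝ E] [FiniteDimensional ℝ E] [MeasurableSpace E] [BorelSpace E]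
    [NormedAddCommGroup G] [NormedSpace ℝ G] (e : E ≃ₗᵢ[ℝ] E) {s : Set E} (hs : e ⁻¹' s = s)
    (f : E → G) : ∫ x in s, f (e x) = ∫ x in s, f x := by
  have := e.measurePreserving.setIntegral_preimage_emb e.toHomeomorph.measurableEmbedding f s
  rwa [hs] at this

def cube (n : ℕ) : Set (EuclideanSpace ℝ (Fin n)) := {x | ∀ i, x i ∈ Set.Icc (-1) 1}

section Cube

variable {n : ℕ}

theorem measurableSet_cube : MeasurableSet (cube n) := by
  have : cube n = ⋂ i, (fun x : EuclideanSpace ℝ (Fin n) => x i) ⁻¹' Set.Icc (-1) 1 := by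
    ext; simp [cube]
  rw [this]
  exact MeasurableSet.iInter fun i => measurableSet_Icc.preimage (by fun_prop)

theorem volume_cube : volume (cube n) = 2 ^ n := by
  have hpre : WithLp.toLp 2 ⁻¹' cube n = Set.univ.pi fun _ => Set.Icc (-1) 1 := by
    ext; simp [cube, Pi.le_def, forall_and]
  rw [← (PiLp.volume_preserving_toLp (Fin n)).measure_preimage
    measurableSet_cube.nullMeasurableSet, hpre, volume_pi_pi]
  norm_num

theorem preimage_piLpCongrLeft_cube (e : Fin n ≃ Fin n) :
    LinearIsometryEquiv.piLpCongrLeft 2 ℝ ℝ e ⁻¹' cube n = cube n := by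
  ext x
  simp only [cube, Set.mem_preimage, Set.mem_ofPred_eq, LinearIsometryEquiv.piLpCongrLeft_apply,
    Equiv.piCongrLeft'_apply]
  exact ⟨fun h i => by simpa using h (e i), fun h _ => h _⟩

theorem preimage_neg_cube : LinearIsometryEquiv.neg ℝ ⁻¹' cube n = cube n := by
  ext x
  simp [cube, and_comm, neg_le]

theorem integrableOn_cube_sq_div_norm_sq {a : EuclideanSpace ℝ (Fin n) → ℝ}
    (ha : Measurable a) (hle : ∀ x, a x ^ 2 ≤ ‖x‖ ^ 2) :
    IntegrableOn (fun x => a x ^ 2 / ‖x‖ ^ 2) (cube n) := by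
  refine Measure.integrableOn_of_bounded (M := 1) (by simp [volume_cube])
    (by fun_prop : Measurable _).aestronglyMeasurable (ae_of_all _ fun x => ?_)
  rw [Real.norm_of_nonneg (by positivity)]
  exact div_le_one_of_le₀ (hle x) (by positivity)

theorem integrableOn_cube_sq_apply_div_norm_sq (i : Fin n) :
    IntegrableOn (fun x => x i ^ 2 / ‖x‖ ^ 2) (cube n) :=
  integrableOn_cube_sq_div_norm_sq (by fun_prop) fun x => by
    simpa using pow_le_pow_left₀ (norm_nonneg _) (PiLp.norm_apply_le x i) 2

theorem setIntegral_cube_sq_apply_div_norm_sq (i : Fin n) :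
    ∫ x in cube n, x i ^ 2 / ‖x‖ ^ 2 = 2 ^ n / n := by
  -- makes the space nontrivial, so that `x ≠ 0` almost everywhere
  have : Nonempty (Fin n) := ⟨i⟩
  have hsymm (j : Fin n) :
      ∫ x in cube n, x j ^ 2 / ‖x‖ ^ 2 = ∫ x in cube n, x i ^ 2 / ‖x‖ ^ 2 := by
    rw [← setIntegral_comp_linearIsometryEquiv
      (LinearIsometryEquiv.piLpCongrLeft 2 ℝ ℝ (Equiv.swap i j)) (preimage_piLpCongrLeft_cube _)]
    simp [LinearIsometryEquiv.piLpCongrLeft_apply]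
  have hsum : ∑ j, ∫ x in cube n, x j ^ 2 / ‖x‖ ^ 2 = 2 ^ n := by
    rw [← integral_finsetSum _ fun j _ => integrableOn_cube_sq_apply_div_norm_sq j]
    calc ∫ x in cube n, ∑ j, x j ^ 2 / ‖x‖ ^ 2 = ∫ _ in cube n, (1 : ℝ) := by
          refine integral_congr_ae (ae_restrict_of_ae ?_)
          filter_upwards [Measure.ae_ne volume 0] with x hx
          rw [← Finset.sum_div, ← EuclideanSpace.real_norm_sq_eq, div_self (by positivity)]
      _ = 2 ^ n := by simp [measureReal_def, volume_cube]
  simp only [hsymm, Finset.sum_const, Finset.card_univ, Fintype.card_fin, nsmul_eq_mul] at hsum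
  rw [← hsum, mul_div_cancel_left₀ _ (Nat.cast_ne_zero.2 (Fin.pos i).ne')]

end Cube

theorem sin_sub_cos_sq_add_cos_add_sin_sq (a b t : ℝ) :
    (a * sin t - b * cos t) ^ 2 + (a * cos t + b * sin t) ^ 2 = a ^ 2 + b ^ 2 := by
  linear_combination (a ^ 2 + b ^ 2) * sin_sq_add_cos_sq t

theorem sin_sub_cos_sq_add_cos_add_sin_sq_le_norm_sq (x : EuclideanSpace ℝ (Fin 3)) :
    (x 0 * sin (x 2) - x 1 * cos (x 2)) ^ 2 + (x 0 * cos (x 2) + x 1 * sin (x 2)) ^ 2 ≤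
      ‖x‖ ^ 2 := by
  rw [sin_sub_cos_sq_add_cos_add_sin_sq, ← sq_add_sq_add_sq_eq_norm_sq]
  exact le_add_of_nonneg_right (sq_nonneg _)

theorem setIntegral_cube_sin_sub_cos_sq_eq_cos_add_sin_sq :
    ∫ x in cube 3, (x 0 * sin (x 2) - x 1 * cos (x 2)) ^ 2 / ‖x‖ ^ 2 =
      ∫ x in cube 3, (x 0 * cos (x 2) + x 1 * sin (x 2)) ^ 2 / ‖x‖ ^ 2 := by
  let ψ := (LinearIsometryEquiv.piLpCongrLeft 2 ℝ ℝ (Equiv.swap (0 : Fin 3) 1)).trans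
    (LinearIsometryEquiv.neg ℝ)
  have hψ : ψ ⁻¹' cube 3 = cube 3 := by
    rw [LinearIsometryEquiv.coe_trans, Set.preimage_comp, preimage_neg_cube,
      preimage_piLpCongrLeft_cube]
  have hswap : Equiv.swap (0 : Fin 3) 1 2 = 2 := by decide
  rw [← setIntegral_comp_linearIsometryEquiv ψ hψ]
  congr 1 with x
  simp [ψ, LinearIsometryEquiv.piLpCongrLeft_apply, hswap]
  ring

theorem setIntegral_cube_sin_sub_cos_sq_div_norm_sq :
    ∫ x in cube 3, (x 0 * sin (x 2) - x 1 * cos (x 2)) ^ 2 / ‖x‖ ^ 2 = 8 / 3 := by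
  set g := fun x : EuclideanSpace ℝ (Fin 3) => (x 0 * sin (x 2) - x 1 * cos (x 2)) ^ 2 / ‖x‖ ^ 2
  set h := fun x : EuclideanSpace ℝ (Fin 3) => (x 0 * cos (x 2) + x 1 * sin (x 2)) ^ 2 / ‖x‖ ^ 2
  have hg : IntegrableOn g (cube 3) := integrableOn_cube_sq_div_norm_sq (by fun_prop) fun x =>
    le_of_add_le_of_nonneg_left (sin_sub_cos_sq_add_cos_add_sin_sq_le_norm_sq x) (sq_nonneg _)
  have hh : IntegrableOn h (cube 3) := integrableOn_cube_sq_div_norm_sq (by fun_prop) fun x =>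
    le_of_add_le_of_nonneg_right (sin_sub_cos_sq_add_cos_add_sin_sq_le_norm_sq x) (sq_nonneg _)
  have hsum (x : EuclideanSpace ℝ (Fin 3)) :
      g x + h x = x 0 ^ 2 / ‖x‖ ^ 2 + x 1 ^ 2 / ‖x‖ ^ 2 := by
    simp only [g, h, ← add_div, sin_sub_cos_sq_add_cos_add_sin_sq]
  calc ∫ x in cube 3, g x = ((∫ x in cube 3, g x) + ∫ x in cube 3, h x) / 2 := by
        rw [setIntegral_cube_sin_sub_cos_sq_eq_cos_add_sin_sq]; ring
    _ = ((∫ x in cube 3, x 0 ^ 2 / ‖x‖ ^ 2) + ∫ x in cube 3, x 1 ^ 2 / ‖x‖ ^ 2) / 2 := by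
        rw [← integral_add hg hh, ← integral_add (integrableOn_cube_sq_apply_div_norm_sq 0)
          (integrableOn_cube_sq_apply_div_norm_sq 1)]
        simp only [hsum]
    _ = 8 / 3 := by
        rw [setIntegral_cube_sq_apply_div_norm_sq, setIntegral_cube_sq_apply_div_norm_sq]
        norm_num

/-- For `X = [−1,1]³`, `q = 2`, and `V₁(x) = x₁² + x₂² + x₃²`, one has
`J_X[V₁] = 1/3`; equivalently,
`(1/8) ∫_{[−1,1]³} (x₁ sin x₃ − x₂ cos x₃)² / (x₁² + x₂² + x₃²) dx = 1/3`. -/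
theorem stmt14 :
    J {x : EuclideanSpace ℝ (Fin 3) | ∀ i, x i ∈ Set.Icc (-1 : ℝ) 1} 2
        (fun x => (x 0) ^ 2 + (x 1) ^ 2 + (x 2) ^ 2) = 1 / 3 ∧
    (1 / 8 : ℝ) *
        ∫ x in {x : EuclideanSpace ℝ (Fin 3) | ∀ i, x i ∈ Set.Icc (-1 : ℝ) 1},
          (x 0 * Real.sin (x 2) - x 1 * Real.cos (x 2)) ^ 2 /
            ((x 0) ^ 2 + (x 1) ^ 2 + (x 2) ^ 2) = 1 / 3 := by
  change J (cube 3) 2 _ = _ ∧ (1 / 8 : ℝ) * ∫ x in cube 3, _ = _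
  simp_rw [J, admissibility_integrand_sq_add_sq_add_sq, sq_add_sq_add_sq_eq_norm_sq, volume_cube,
    setIntegral_cube_sin_sub_cos_sq_div_norm_sq]
  norm_num
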